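/- arXiv:1908.02968 — 3 statements merged into one kernel-verified Lean document; each statement's English description precedes it below -/
import Mathlib

section
/- Let R be a commutative ring and G an abelian group, and let RG be the group ring. Suppose R is reduced and there exists a prime number p such that the characteristic of R is p and G contains an element of order p. Then the nilradical of RG equals Φ(G_p), where G_p is the p-primary component of G (the subgroup of elements of G whose order is a power of p). -/
/-!
The ideal `Φ(N)` is the kernel of `RG → R[G/N]`, and for `N = G_p` the quotient `G/G_p` has
injective `p`-th power map. In characteristic `p` the Frobenius of `R[H]` sends `∑ r_h h` to
`∑ r_h^p h^p`, so it is injective on `R[G/G_p]` when `R` is reduced: that ring is reduced and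
every nilpotent of `RG` lies in `Φ(G_p)`. Conversely, for `n ∈ G_p` with `n^(p^k) = 1`,
`(n - 1)^(p^k) = n^(p^k) - 1 = 0`.
-/

/-- `Phi R N` is the ideal of the group ring `MonoidAlgebra R G` generated by the
elements `n - 1` with `n ∈ N`, i.e. the extension of the augmentation ideal of `RN`. -/
noncomputable def Phi (R : Type*) {G : Type*} [CommRing R] [CommGroup G] (N : Subgroup G) :
    Ideal (MonoidAlgebra R G) :=
  Ideal.span ((fun n => MonoidAlgebra.of R G n - 1) '' (N : Set G))

namespace MonoidAlgebra

variable {R G : Type*}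

instance charP [Semiring R] [Monoid G] (p : ℕ) [CharP R p] : CharP R[G] p :=
  charP_of_injective_ringHom (f := singleOneRingHom (R := R) (M := G))
    (fun _ _ h => Finsupp.single_injective 1 (congrArg coeff h)) p

theorem frobenius_eq_mapDomainRingHom_comp [CommSemiring R] [CommMonoid G] (p : ℕ)
    [Fact p.Prime] [CharP R p] :
    frobenius R[G] p = (mapDomainRingHom R (powMonoidHom p)).comp (mapRingHom G (frobenius R p)) :=
  ringHom_ext (fun _ => by simp [frobenius_def, single_pow])
    (fun _ => by simp [frobenius_def, single_pow])

theorem isReduced_of_injective_powMonoidHom [CommRing R] [IsReduced R] [CommMonoid G] (p : ℕ)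
    [Fact p.Prime] [CharP R p] (hG : Function.Injective (powMonoidHom p : G →* G)) :
    IsReduced R[G] := by
  refine (isReduced_iff_pow_one_lt p (Fact.out : p.Prime).one_lt).2 fun x hx => ?_
  have hfrob : frobenius R[G] p x = 0 := hx
  rw [frobenius_eq_mapDomainRingHom_comp, RingHom.comp_apply] at hfrob
  exact (map_injective _ (frobenius_inj R p)).eq_iff.1 <|
    (mapDomain_injective hG).eq_iff.1 (by simpa [coe_mapRingHom] using hfrob)

end MonoidAlgebra

open MonoidAlgebra

section Phi

variable {R G : Type*} [CommRing R] [CommGroup G] (N : Subgroup G)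

theorem sub_mapDomain_out_mapDomain_mk_mem_Phi (x : MonoidAlgebra R G) :
    x - mapDomain Quotient.out (mapDomain (QuotientGroup.mk : G → G ⧸ N) x) ∈ Phi R N := by
  induction x using MonoidAlgebra.induction_linear with
  | zero => simp
  | add x y hx hy =>
    rw [mapDomain_add, mapDomain_add, add_sub_add_comm]
    exact add_mem hx hy
  | single g r =>
    set g' : G := (QuotientGroup.mk g : G ⧸ N).out
    have hg' : g'⁻¹ * g ∈ N := QuotientGroup.eq.1 (QuotientGroup.out_eq' _)
    have hsplit : single g r - single g' r = single g' r * (of R G (g'⁻¹ * g) - 1) := by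
      rw [mul_sub, mul_one, of_apply, single_mul_single, mul_inv_cancel_left, mul_one]
    rw [mapDomain_single, mapDomain_single, hsplit]
    exact Ideal.mul_mem_left _ _ (Ideal.subset_span ⟨_, hg', rfl⟩)

theorem ker_mapDomainRingHom_mk' :
    RingHom.ker (mapDomainRingHom R (QuotientGroup.mk' N)) = Phi R N := by
  apply le_antisymm
  · intro x hx
    have hx0 : mapDomain (QuotientGroup.mk : G → G ⧸ N) x = 0 := hx
    simpa [hx0] using sub_mapDomain_out_mapDomain_mk_mem_Phi N x
  · rw [Phi, Ideal.span_le]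
    rintro _ ⟨n, hn, rfl⟩
    rw [SetLike.mem_coe, RingHom.mem_ker, map_sub, map_one, of_apply, mapDomainRingHom_apply,
      mapDomain_single, QuotientGroup.coe_mk', (QuotientGroup.eq_one_iff n).2 hn, sub_eq_zero]
    rfl

theorem Phi_le_nilradical_of_isPGroup (p : ℕ) [Fact p.Prime] [CharP R p] (hN : IsPGroup p N) :
    Phi R N ≤ nilradical (MonoidAlgebra R G) := by
  rw [Phi, Ideal.span_le]
  rintro _ ⟨n, hn, rfl⟩
  obtain ⟨k, hk⟩ := hN ⟨n, hn⟩
  refine mem_nilradical.2 ⟨p ^ k, ?_⟩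
  rw [sub_pow_char_pow, one_pow, ← map_pow, ← N.coe_pow ⟨n, hn⟩, hk, OneMemClass.coe_one,
    map_one, sub_self]

end Phi

theorem CommGroup.injective_powMonoidHom_quotient_primaryComponent {G : Type*} [CommGroup G]
    (p : ℕ) : Function.Injective (powMonoidHom p : G ⧸ primaryComponent G p →* _) := by
  refine (injective_iff_map_eq_one _).2 fun q hq => ?_
  obtain ⟨g, rfl⟩ := QuotientGroup.mk_surjective q
  obtain ⟨k, hk⟩ := (QuotientGroup.eq_one_iff (N := primaryComponent G p) (g ^ p)).1
    (by rw [QuotientGroup.mk_pow]; exact hq)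
  exact (QuotientGroup.eq_one_iff g).2 ⟨k + 1, by rwa [pow_succ', pow_mul]⟩

theorem stmt1_general (R G : Type*) [CommRing R] [CommGroup G] [IsReduced R]
    (p : ℕ) [Fact p.Prime] [CharP R p] :
    nilradical (MonoidAlgebra R G) = Phi R (CommGroup.primaryComponent G p) := by
  set N := CommGroup.primaryComponent G p
  have : IsReduced (MonoidAlgebra R (G ⧸ N)) :=
    isReduced_of_injective_powMonoidHom p
      (CommGroup.injective_powMonoidHom_quotient_primaryComponent p)
  refine le_antisymm (fun x hx => ?_)
    (Phi_le_nilradical_of_isPGroup N p CommGroup.primaryComponent.isPGroup)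
  rw [← ker_mapDomainRingHom_mk']
  exact IsReduced.eq_zero _ (IsNilpotent.map hx _)

theorem stmt1 (R G : Type*) [CommRing R] [CommGroup G] [IsReduced R]
    (p : ℕ) [Fact p.Prime] [CharP R p] (g : G) (hg : orderOf g = p) :
    nilradical (MonoidAlgebra R G) = Phi R (CommGroup.primaryComponent G p) :=
  stmt1_general R G p
end

section
/- Let R be a field of characteristic 2 and let G be an abelian 2-group containing an element g of order 4. Then the principal ideal (g − 1)³·RG of the group ring RG is a proper nonzero ideal of RG that does not belong to Φ(𝔖). -/
open MonoidAlgebra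

theorem MonoidAlgebra.of_sub_one_pow_expChar_pow {R G : Type*} [CommRing R] [CommMonoid G]
    (p : ℕ) [ExpChar R p] (g : G) (n : ℕ) :
    (of R G g - 1) ^ p ^ n = of R G (g ^ p ^ n) - 1 := by
  have : ExpChar (MonoidAlgebra R G) p := .of_injective_algebraMap' R p
  rw [sub_pow_expChar_pow, one_pow, map_pow]

theorem MonoidAlgebra.of_sub_one_mul_of_sub_one_ne_zero {R G : Type*} [Ring R] [Nontrivial R]
    [Group G] {a b : G} (ha : a ≠ 1) (hb : b ^ 2 ≠ 1) :
    (of R G a - 1) * (of R G b - 1) ≠ 0 := by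
  have hb1 : b ≠ 1 := by rintro rfl; simp at hb
  intro h
  replace h : of R G (a * b) - of R G a - of R G b + 1 = 0 := by
    rw [← h, map_mul]; noncomm_ring
  -- If `a * b ≠ 1` the coefficient at `1` is `1`; otherwise `a = b⁻¹ ≠ b` and the one at `b` is `-1`.
  by_cases hab : a * b = 1
  · have hab_ne_b : a * b ≠ b := by simpa using ha
    have ha_ne_b : a ≠ b := by rintro rfl; exact hb (by rwa [sq])
    simpa [of_apply, one_def, hab_ne_b, ha_ne_b, Ne.symm hb1] using congrArg (coeff · b) h
  · simpa [of_apply, one_def, hab, ha, hb1] using congrArg (coeff · 1) h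

theorem of_sub_one_mem_Phi (R : Type*) {G : Type*} [CommRing R] [CommGroup G] {N : Subgroup G}
    {n : G} (hn : n ∈ N) : of R G n - 1 ∈ Phi R N :=
  Ideal.subset_span ⟨n, hn, rfl⟩

theorem Phi_bot (R G : Type*) [CommRing R] [CommGroup G] : Phi R (⊥ : Subgroup G) = ⊥ := by
  simp [Phi, one_def]

theorem stmt10_general (R G : Type*) [Field R] [CommGroup G] [CharP R 2]
    (g : G) (hg : orderOf g = 4) :
    Ideal.span {(MonoidAlgebra.of R G g - 1) ^ 3} ≠ ⊤ ∧
    Ideal.span {(MonoidAlgebra.of R G g - 1) ^ 3} ≠ ⊥ ∧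
    ∀ N : Subgroup G, Ideal.span {(MonoidAlgebra.of R G g - 1) ^ 3} ≠ Phi R N := by
  set x := of R G g - 1
  have hg2 : g ^ 2 ≠ 1 := pow_ne_one_of_lt_orderOf (by norm_num) (by omega)
  have hx2 : x ^ 2 = of R G (g ^ 2) - 1 := of_sub_one_pow_expChar_pow 2 g 1
  have hx4 : x ^ 4 = 0 := by
    have hg4 : g ^ 2 ^ 2 = 1 := by rw [← orderOf_dvd_iff_pow_eq_one, hg]; rfl
    rw [show 4 = 2 ^ 2 by rfl, of_sub_one_pow_expChar_pow, hg4, map_one, sub_self]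
  have hx3 : x ^ 3 ≠ 0 := by
    rw [pow_succ, hx2]
    exact of_sub_one_mul_of_sub_one_ne_zero hg2 hg2
  refine ⟨?_, mt Ideal.span_singleton_eq_bot.1 hx3, fun N h => ?_⟩
  · rw [Ne, Ideal.span_singleton_eq_top]
    exact (IsNilpotent.pow_of_pos ⟨4, hx4⟩ three_ne_zero).not_isUnit
  · have hN : N = ⊥ := by
      refine (Subgroup.eq_bot_iff_forall N).2 fun n hn => ?_
      obtain ⟨c, hc⟩ := Ideal.mem_span_singleton'.1 (h ▸ of_sub_one_mem_Phi R hn)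
      by_contra hn1
      refine of_sub_one_mul_of_sub_one_ne_zero (R := R) hn1 hg2 ?_
      rw [← hc, mul_assoc, ← pow_succ, hx4, mul_zero]
    exact hx3 (Ideal.span_singleton_eq_bot.1 (h.trans (hN ▸ Phi_bot R G)))

theorem stmt10 (R G : Type*) [Field R] [CommGroup G] [CharP R 2]
    (hG : IsPGroup 2 G) (g : G) (hg : orderOf g = 4) :
    Ideal.span {(MonoidAlgebra.of R G g - 1) ^ 3} ≠ ⊤ ∧
    Ideal.span {(MonoidAlgebra.of R G g - 1) ^ 3} ≠ ⊥ ∧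
    ∀ N : Subgroup G, Ideal.span {(MonoidAlgebra.of R G g - 1) ^ 3} ≠ Phi R N :=
  stmt10_general R G g hg
end

section
/- Let R be a field and G a cyclic group of finite order m with generator g. Let x = Σ_{i=0}^{m−1} r_i g^i be a nonzero element of the group ring RG, set d = m − rank(A_x), and suppose that d divides m, that Σ_{i=0}^{(m/d)−1} r_{j+id} = 0 for every j with 0 ≤ j ≤ d−1, and that rank(A_x) = rank(Ã_{x,d}). Then the quotient ring RG/xRG is isomorphic as an R-algebra to the group ring R(G/⟨g^d⟩). -/
/-- The circulant-type matrix `A_x` attached to the coefficient vector `r`: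
its `(i,j)` entry is `r_{(m-1-i-j) mod m}` (computed as `(2*m-1-i-j) % m` to avoid
truncated natural subtraction). -/
def circMatrix {R : Type*} [CommRing R] (m : ℕ) (hm : 0 < m) (r : Fin m → R) :
    Matrix (Fin m) (Fin m) R :=
  Matrix.of fun i j => r ⟨(2 * m - 1 - (i : ℕ) - (j : ℕ)) % m, Nat.mod_lt _ hm⟩

/-- The augmented matrix `Ã_{x,n}`: `A_x` with the extra column `b` appended, where
`b_{m-1-n} = 1`, `b_{m-1} = -1` and all other entries vanish. -/
def circMatrixAug {R : Type*} [CommRing R] (m n : ℕ) (hm : 0 < m) (r : Fin m → R) :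
    Matrix (Fin m) (Fin (m + 1)) R :=
  Matrix.of fun i j =>
    if h : (j : ℕ) < m then circMatrix m hm r i ⟨j, h⟩
    else if (i : ℕ) = m - 1 - n then 1
    else if (i : ℕ) = m - 1 then -1
    else 0

/-!
Let `π : RG → R(G/⟨g^d⟩)` be induced by the quotient map. Since `g^i` and `g^(i mod d)` have
the same image, `π x = Σ_{j<d} (Σ_k r_{j+kd}) ḡ^j`, which vanishes by hypothesis: `(x) ⊆ ker π`.
Up to reversing the order of its rows, `A_x` is the matrix of multiplication by `x` in the basis
`1, g, …, g^(m-1)`, hence `dim_R (x) = rank A_x = m - d = dim_R ker π` and the two ideals agree.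
-/

open Finset Module MonoidAlgebra

theorem Finset.sum_range_mul_eq_sum_sum {M : Type*} [AddCommMonoid M] (f : ℕ → M) (n d : ℕ) :
    ∑ i ∈ range (n * d), f i = ∑ j ∈ range d, ∑ k ∈ range n, f (j + k * d) := by
  rw [Finset.sum_comm]
  induction n with
  | zero => simp
  | succ n ih =>
    rw [Nat.succ_mul, Finset.sum_range_add, ih, Finset.sum_range_succ]
    simp only [add_comm]

theorem MonoidAlgebra.mapDomain_surjective {R M N : Type*} [Semiring R] {f : M → N}
    (hf : Function.Surjective f) : Function.Surjective (mapDomain (R := R) f) := by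
  intro y
  obtain ⟨c, hc⟩ := Finsupp.mapDomain_surjective hf y.coeff
  exact ⟨ofCoeff c, coeff_injective (by simpa using hc)⟩

theorem MonoidAlgebra.sum_range_single_pow_eq_zero {R H : Type*} [Semiring R] [Monoid H]
    {h : H} {d : ℕ} (hh : h ^ d = 1) (n : ℕ) (f : ℕ → R)
    (hf : ∀ j < d, ∑ k ∈ range n, f (j + k * d) = 0) :
    ∑ i ∈ range (n * d), single (h ^ i) (f i) = 0 := by
  rw [Finset.sum_range_mul_eq_sum_sum]
  refine Finset.sum_eq_zero fun j hj => ?_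
  have hpow : ∀ k, h ^ (j + k * d) = h ^ j := fun k => by
    rw [pow_add, mul_comm k, pow_mul, hh, one_pow, mul_one]
  simp only [hpow]
  change ∑ k ∈ range n, singleAddHom (h ^ j) (f (j + k * d)) = 0
  rw [← map_sum, hf j (mem_range.mp hj), map_zero]

theorem Ideal.eq_ker_of_le_ker_of_finrank_add_eq {K A B : Type*} [Field K] [CommRing A] [Ring B]
    [Algebra K A] [Algebra K B] [FiniteDimensional K A] (f : A →ₐ[K] B)
    (hf : Function.Surjective f) {I : Ideal A} (hI : I ≤ RingHom.ker f)
    (h : finrank K (I.restrictScalars K) + finrank K B = finrank K A) :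
    I = RingHom.ker f := by
  have hker : (RingHom.ker f).restrictScalars K = LinearMap.ker f.toLinearMap := by
    ext; simp [RingHom.mem_ker]
  have hrank := LinearMap.finrank_range_add_finrank_ker f.toLinearMap
  rw [LinearMap.range_eq_top.mpr hf, finrank_top, ← hker] at hrank
  refine Submodule.restrictScalars_injective K _ _
    (Submodule.eq_of_le_of_finrank_eq (fun a ha => hI ha) ?_)
  omega

theorem card_quotient_zpowers_pow {G : Type*} [Group G] {g : G} {m d : ℕ} (hm : 0 < m)
    (hg : orderOf g = m) (hcard : Nat.card G = m) (hdvd : d ∣ m) :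
    Nat.card (G ⧸ Subgroup.zpowers (g ^ d)) = d := by
  have hd : d ≠ 0 := (Nat.pos_of_dvd_of_pos hdvd hm).ne'
  have hsub : Nat.card (Subgroup.zpowers (g ^ d)) = m / d := by
    rw [Nat.card_zpowers, orderOf_pow_of_dvd hd (hg ▸ hdvd), hg]
  have hprod := Subgroup.card_eq_card_quotient_mul_card_subgroup (Subgroup.zpowers (g ^ d))
  rw [hcard, hsub] at hprod
  exact Nat.eq_of_mul_eq_mul_right (Nat.div_pos (Nat.le_of_dvd hm hdvd) (Nat.pos_of_ne_zero hd))
    (hprod.symm.trans (Nat.mul_div_cancel' hdvd).symm)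

section CyclicGroupRing

variable {R G : Type*} [CommRing R] [CommGroup G] {g : G} {m : ℕ}

theorem bijective_fin_pow (hm : 0 < m) (hg : orderOf g = m) (hcard : Nat.card G = m) :
    Function.Bijective (fun i : Fin m => g ^ (i : ℕ)) := by
  have : Finite G := Nat.finite_of_card_ne_zero (hcard ▸ hm.ne')
  refine (Nat.bijective_iff_injective_and_card _).mpr ⟨fun i j hij => ?_, by simp [hcard]⟩
  exact Fin.ext (pow_injOn_Iio_orderOf (hg ▸ i.2 : (i : ℕ) < orderOf g) (hg ▸ j.2) hij)

variable (R) in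
noncomputable def powBasis (hm : 0 < m) (hg : orderOf g = m) (hcard : Nat.card G = m) :
    Basis (Fin m) R (MonoidAlgebra R G) :=
  (MonoidAlgebra.basis G R).reindex (Equiv.ofBijective _ (bijective_fin_pow hm hg hcard)).symm

theorem powBasis_apply (hm : 0 < m) (hg : orderOf g = m) (hcard : Nat.card G = m) (i : Fin m) :
    powBasis R hm hg hcard i = single (g ^ (i : ℕ)) 1 := by
  simp [powBasis]

theorem powBasis_repr_apply (hm : 0 < m) (hg : orderOf g = m) (hcard : Nat.card G = m)
    (v : MonoidAlgebra R G) (i : Fin m) :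
    (powBasis R hm hg hcard).repr v i = v.coeff (g ^ (i : ℕ)) :=
  rfl

theorem coeff_sum_single_pow (hm : 0 < m) (hg : orderOf g = m) (r : Fin m → R) (t : ℕ) :
    (∑ i : Fin m, single (g ^ (i : ℕ)) (r i)).coeff (g ^ t) = r ⟨t % m, Nat.mod_lt _ hm⟩ := by
  rw [coeff_sum, Finsupp.finsetSum_apply, Finset.sum_eq_single ⟨t % m, Nat.mod_lt _ hm⟩]
  · have hpow : g ^ (t % m) = g ^ t := by rw [← hg, pow_mod_orderOf]
    rw [coeff_single, ← hpow]
    exact Finsupp.single_eq_same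
  · intro i _ hi
    refine Finsupp.single_eq_of_ne fun hit => ?_
    have hmod := pow_eq_pow_iff_modEq.mp hit
    rw [hg, Nat.ModEq, Nat.mod_eq_of_lt i.2] at hmod
    exact hi (Fin.ext hmod.symm)
  · exact fun h => absurd (mem_univ _) h

theorem toMatrix_mul_sum_single_pow_eq_circMatrix (hm : 0 < m) (hg : orderOf g = m)
    (hcard : Nat.card G = m) (r : Fin m → R) :
    LinearMap.toMatrix (powBasis R hm hg hcard) ((powBasis R hm hg hcard).reindex Fin.revPerm)
      (LinearMap.mul R _ (∑ i : Fin m, single (g ^ (i : ℕ)) (r i))) = circMatrix m hm r := by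
  ext i j
  have hpow : g ^ (m - ((i : ℕ) + 1)) * (g ^ (j : ℕ))⁻¹ = g ^ (2 * m - 1 - i - j) := by
    have hgm : g ^ m = 1 := hg ▸ pow_orderOf_eq_one g
    rw [mul_inv_eq_iff_eq_mul, ← pow_add, show 2 * m - 1 - i - j + j = m + (m - (i + 1)) by omega,
      pow_add, hgm, one_mul]
  rw [LinearMap.toMatrix_apply, Basis.repr_reindex_apply, powBasis_repr_apply,
    LinearMap.mul_apply', powBasis_apply, coeff_mul_single_apply, Fin.revPerm_symm,
    Fin.revPerm_apply, Fin.val_rev, hpow, coeff_sum_single_pow hm hg, mul_one]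
  rfl

theorem rank_circMatrix_eq_finrank_span {K : Type*} [Field K] (hm : 0 < m)
    (hg : orderOf g = m) (hcard : Nat.card G = m) (r : Fin m → K) :
    (circMatrix m hm r).rank =
      finrank K ((Ideal.span {∑ i : Fin m, single (g ^ (i : ℕ)) (r i)}).restrictScalars K) := by
  classical
  rw [← toMatrix_mul_sum_single_pow_eq_circMatrix hm hg hcard,
    Matrix.rank_eq_finrank_range_toLin _ ((powBasis K hm hg hcard).reindex Fin.revPerm)
      (powBasis K hm hg hcard), Matrix.toLin_toMatrix, Ideal.range_mul]

theorem mapDomainAlgHom_mk'_sum_single_pow_eq_zero {d : ℕ} (hm : 0 < m) (hdvd : d ∣ m)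
    (r : Fin m → R) (hsum : ∀ j < d, ∑ i ∈ range (m / d), r ⟨(j + i * d) % m, Nat.mod_lt _ hm⟩ = 0) :
    mapDomainAlgHom R R (QuotientGroup.mk' (Subgroup.zpowers (g ^ d)))
      (∑ i : Fin m, single (g ^ (i : ℕ)) (r i)) = 0 := by
  have hgd : QuotientGroup.mk' (Subgroup.zpowers (g ^ d)) g ^ d = 1 := by
    rw [← map_pow, QuotientGroup.mk'_apply, QuotientGroup.eq_one_iff]
    exact Subgroup.mem_zpowers _
  have hzero :=
    sum_range_single_pow_eq_zero hgd (m / d) (fun i => r ⟨i % m, Nat.mod_lt _ hm⟩) hsum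
  rw [Nat.div_mul_cancel hdvd, ← Fin.sum_univ_eq_sum_range] at hzero
  rw [map_sum]
  simpa [Nat.mod_eq_of_lt, map_pow] using hzero

end CyclicGroupRing

open Module in
theorem stmt17_general {R G : Type*} [Field R] [CommGroup G] (m : ℕ) (hm : 0 < m)
    (g : G) (hgen : ∀ a : G, a ∈ Subgroup.zpowers g) (hcard : Nat.card G = m)
    (r : Fin m → R) (x : MonoidAlgebra R G)
    (hx : x = ∑ i : Fin m, MonoidAlgebra.single (g ^ (i : ℕ)) (r i))
    (d : ℕ) (hd : d = m - (circMatrix m hm r).rank) (hdvd : d ∣ m)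
    (hsum : ∀ j : ℕ, j < d →
      ∑ i ∈ Finset.range (m / d), r ⟨(j + i * d) % m, Nat.mod_lt _ hm⟩ = 0) :
    Nonempty ((MonoidAlgebra R G ⧸ Ideal.span {x}) ≃ₐ[R]
      MonoidAlgebra R (G ⧸ Subgroup.zpowers (g ^ d))) := by
  subst hx
  have hg : orderOf g = m := hcard ▸ orderOf_eq_card_of_forall_mem_zpowers hgen
  let π := mapDomainAlgHom R R (QuotientGroup.mk' (Subgroup.zpowers (g ^ d)))
  have hπ : Function.Surjective π := mapDomain_surjective (QuotientGroup.mk'_surjective _)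
  have hle : Ideal.span {∑ i : Fin m, single (g ^ (i : ℕ)) (r i)} ≤ RingHom.ker π :=
    (Ideal.span_singleton_le_iff_mem _).mpr
      (mapDomainAlgHom_mk'_sum_single_pow_eq_zero hm hdvd r hsum)
  have : FiniteDimensional R (MonoidAlgebra R G) :=
    (powBasis R hm hg hcard).finiteDimensional_of_finite
  have hrank : (circMatrix m hm r).rank ≤ m := by
    simpa using (circMatrix m hm r).rank_le_card_width
  have hker := Ideal.eq_ker_of_le_ker_of_finrank_add_eq π hπ hle <| by
    rw [← rank_circMatrix_eq_finrank_span hm hg hcard,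
      finrank_eq_nat_card_basis (MonoidAlgebra.basis _ R),
      card_quotient_zpowers_pow hm hg hcard hdvd, finrank_eq_card_basis (powBasis R hm hg hcard),
      Fintype.card_fin]
    omega
  exact ⟨(Ideal.quotientEquivAlgOfEq R hker).trans (Ideal.quotientKerAlgEquivOfSurjective hπ)⟩

theorem stmt17 {R G : Type*} [Field R] [CommGroup G] (m : ℕ) (hm : 0 < m)
    (g : G) (hgen : ∀ a : G, a ∈ Subgroup.zpowers g) (hcard : Nat.card G = m)
    (r : Fin m → R) (x : MonoidAlgebra R G)
    (hx : x = ∑ i : Fin m, MonoidAlgebra.single (g ^ (i : ℕ)) (r i)) (hx0 : x ≠ 0)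
    (d : ℕ) (hd : d = m - (circMatrix m hm r).rank) (hdvd : d ∣ m)
    (hsum : ∀ j : ℕ, j < d →
      ∑ i ∈ Finset.range (m / d), r ⟨(j + i * d) % m, Nat.mod_lt _ hm⟩ = 0)
    (hrank : (circMatrix m hm r).rank = (circMatrixAug m d hm r).rank) :
    Nonempty ((MonoidAlgebra R G ⧸ Ideal.span {x}) ≃ₐ[R]
      MonoidAlgebra R (G ⧸ Subgroup.zpowers (g ^ d))) :=
  stmt17_general m hm g hgen hcard r x hx d hd hdvd hsum
end
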